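/- Let p and q be probability densities on a domain Ω with 0 < C_min ≤ p(x), q(x) ≤ C_max < ∞, and suppose the score of p is bounded: C_s := sup_{x∈Ω} ‖∇ log p(x)‖² < ∞. Then for any real k ≠ 0 and any λ > 0, ∫_Ω [p(x)^k ∇log p(x) − q(x)^k ∇log q(x)] · ∇log(p(x)/q(x)) p(x) dx ≥ K₁ ∫_Ω ‖∇log(p(x)/q(x))‖² p(x) dx + K₂ D_KL(p‖q), where for k > 0: K₁ = C_min^k − (λ/2) C_s and K₂ = − k² C_max² max{C_min^{2k−2}, C_max^{2k−2}} / ((1 − log 2) λ); and for k < 0: K₁ = C_max^k − (λ/2) C_s and K₂ = − k² C_max² C_min^{2k−2} / ((1 − log 2) λ). -/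

import Mathlib

/-!
Write `w = ∇log(p/q) = ∇log p - ∇log q`. Then
`⟪pᵏ∇log p - qᵏ∇log q, w⟫ = (pᵏ - qᵏ)⟪∇log p, w⟫ + qᵏ‖w‖²`, and the last term is at least
`(inf qᵏ)‖w‖²`. By Cauchy–Schwarz and Young's inequality with weight `λ`, together with the score
bound, the first term is at least `-(λ/2) C_s ‖w‖² - (pᵏ - qᵏ)²/(2λ)`. The mean value theorem for
`s ↦ sᵏ` on `[C_min, C_max]` bounds `(pᵏ - qᵏ)²` by `k² (sup s^(2k-2)) (p - q)²`, and pointwise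
`(a - b)² ≤ 2 max(a, b) · b · klFun(a/b)`, where `b · klFun(a/b) = a log(a/b) + b - a` integrates
to `D_KL(p‖q)` because `∫ p = ∫ q`. This is the L²–KL comparison with the sharper constant
`2 C_max`, which only improves `K₂`.
-/

open MeasureTheory RealInnerProductSpace Real Set InformationTheory

lemma sq_sub_one_le_two_mul_klFun {t : ℝ} (ht : 0 ≤ t) (ht1 : t ≤ 1) :
    (t - 1) ^ 2 ≤ 2 * klFun t := by
  have hanti : AntitoneOn (fun s => 2 * klFun s - (s - 1) ^ 2) (Ici 0) := by
    refine antitoneOn_of_hasDerivWithinAt_nonpos (f' := fun s => 2 * log s - 2 * (s - 1))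
      (convex_Ici 0) (by fun_prop) (fun s hs => ?_) (fun s hs => ?_) <;>
      rw [interior_Ici] at hs
    · have h := ((hasDerivAt_klFun hs.ne').const_mul 2).sub (((hasDerivAt_id s).sub_const 1).pow 2)
      refine (h.congr_deriv ?_).hasDerivWithinAt
      simp
    · linarith [log_le_sub_one_of_pos hs]
  have h := hanti (mem_Ici.2 ht) (mem_Ici.2 zero_le_one) ht1
  simp only [klFun_one] at h
  linarith

lemma sq_sub_one_le_two_mul_mul_klFun {t : ℝ} (ht : 1 ≤ t) :
    (t - 1) ^ 2 ≤ 2 * t * klFun t := by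
  have hmono : MonotoneOn (fun s => 2 * s * klFun s - (s - 1) ^ 2) (Ici 0) := by
    refine monotoneOn_of_hasDerivWithinAt_nonneg (f' := fun s => 4 * klFun s)
      (convex_Ici 0) (by fun_prop) (fun s hs => ?_) (fun s hs => ?_) <;>
      rw [interior_Ici] at hs
    · have h := (((hasDerivAt_id s).const_mul 2).mul (hasDerivAt_klFun hs.ne')).sub
        (((hasDerivAt_id s).sub_const 1).pow 2)
      refine (h.congr_deriv ?_).hasDerivWithinAt
      simp only [klFun_apply, id]
      field_simp
      ring
    · exact mul_nonneg zero_le_four (klFun_nonneg hs.le)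
  have h := hmono (mem_Ici.2 zero_le_one) (mem_Ici.2 (zero_le_one.trans ht)) ht
  simp only [klFun_one] at h
  linarith

lemma sq_sub_one_le_two_mul_max_mul_klFun {t : ℝ} (ht : 0 ≤ t) :
    (t - 1) ^ 2 ≤ 2 * max 1 t * klFun t := by
  rcases le_total t 1 with h | h
  · rw [max_eq_left h, mul_one]
    exact sq_sub_one_le_two_mul_klFun ht h
  · rw [max_eq_right h]
    exact sq_sub_one_le_two_mul_mul_klFun h

lemma sq_sub_le_two_mul_max_mul_klFun_div {a b : ℝ} (ha : 0 ≤ a) (hb : 0 < b) :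
    (a - b) ^ 2 ≤ 2 * max a b * (b * klFun (a / b)) := by
  have h := mul_le_mul_of_nonneg_left
    (sq_sub_one_le_two_mul_max_mul_klFun (div_nonneg ha hb.le)) (sq_nonneg b)
  have hmax : b * max 1 (a / b) = max a b := by
    rw [mul_max_of_nonneg _ _ hb.le, mul_one, mul_div_cancel₀ _ hb.ne', max_comm]
  calc (a - b) ^ 2 = b ^ 2 * (a / b - 1) ^ 2 := by field_simp
    _ ≤ b ^ 2 * (2 * max 1 (a / b) * klFun (a / b)) := h
    _ = 2 * (b * max 1 (a / b)) * (b * klFun (a / b)) := by ring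
    _ = 2 * max a b * (b * klFun (a / b)) := by rw [hmax]

lemma mul_klFun_div {a b : ℝ} (hb : b ≠ 0) : b * klFun (a / b) = a * log (a / b) + b - a := by
  rw [klFun_apply]
  field_simp

lemma rpow_le_max_rpow {a b x r : ℝ} (ha : 0 < a) (hx : x ∈ Icc a b) :
    x ^ r ≤ max (a ^ r) (b ^ r) := by
  rcases le_total 0 r with hr | hr
  · exact le_max_of_le_right (rpow_le_rpow (ha.le.trans hx.1) hx.2 hr)
  · exact le_max_of_le_left (rpow_le_rpow_of_nonpos ha hx.1 hr)

lemma abs_rpow_sub_rpow_le {a b s t r : ℝ} (ha : 0 < a) (hs : s ∈ Icc a b) (ht : t ∈ Icc a b) :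
    |s ^ r - t ^ r| ≤ |r| * max (a ^ (r - 1)) (b ^ (r - 1)) * |s - t| := by
  have hderiv : ∀ x ∈ Icc a b,
      HasDerivWithinAt (fun x => x ^ r) (r * x ^ (r - 1)) (Icc a b) x := fun x hx =>
    (hasDerivAt_rpow_const (Or.inl (ha.trans_le hx.1).ne')).hasDerivWithinAt
  have hbound : ∀ x ∈ Icc a b, ‖r * x ^ (r - 1)‖ ≤ |r| * max (a ^ (r - 1)) (b ^ (r - 1)) :=
    fun x hx => by
      rw [norm_mul, Real.norm_eq_abs, Real.norm_eq_abs,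
        abs_of_pos (rpow_pos_of_pos (ha.trans_le hx.1) _)]
      exact mul_le_mul_of_nonneg_left (rpow_le_max_rpow ha hx) (abs_nonneg r)
  exact Convex.norm_image_sub_le_of_norm_hasDerivWithin_le hderiv hbound (convex_Icc a b) ht hs

lemma sq_rpow_sub_rpow_le {a b s t r : ℝ} (ha : 0 < a) (hs : s ∈ Icc a b) (ht : t ∈ Icc a b) :
    (s ^ r - t ^ r) ^ 2 ≤ r ^ 2 * max (a ^ (2 * r - 2)) (b ^ (2 * r - 2)) * (s - t) ^ 2 := by
  have hsq : ∀ x : ℝ, 0 ≤ x → (x ^ (r - 1)) ^ 2 = x ^ (2 * r - 2) := fun x hx => by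
    rw [← rpow_natCast, ← rpow_mul hx]
    ring_nf
  have hmax : max (a ^ (r - 1)) (b ^ (r - 1)) ^ 2 = max (a ^ (2 * r - 2)) (b ^ (2 * r - 2)) := by
    rw [← hsq a ha.le, ← hsq b (ha.le.trans (hs.1.trans hs.2))]
    exact pow_left_monotoneOn.map_max (rpow_nonneg ha.le _)
      (rpow_nonneg (ha.le.trans (hs.1.trans hs.2)) _)
  have h := pow_le_pow_left₀ (abs_nonneg _) (abs_rpow_sub_rpow_le (r := r) ha hs ht) 2
  rwa [mul_pow, mul_pow, sq_abs, sq_abs, sq_abs, hmax] at h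

lemma sq_rpow_sub_rpow_le_of_le_one {a b s t r : ℝ} (ha : 0 < a) (hr : r ≤ 1)
    (hs : s ∈ Icc a b) (ht : t ∈ Icc a b) :
    (s ^ r - t ^ r) ^ 2 ≤ r ^ 2 * a ^ (2 * r - 2) * (s - t) ^ 2 := by
  have h := sq_rpow_sub_rpow_le (r := r) ha hs ht
  rwa [max_eq_left (rpow_le_rpow_of_nonpos ha (hs.1.trans hs.2) (by linarith))] at h

section KullbackLeibler

variable {α : Type*} [MeasurableSpace α] {μ : Measure α} {p q : α → ℝ}

lemma integrable_mul_klFun_div (hq : ∀ᵐ x ∂μ, q x ≠ 0) (hp_int : Integrable p μ)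
    (hq_int : Integrable q μ) (hKL : Integrable (fun x => p x * log (p x / q x)) μ) :
    Integrable (fun x => q x * klFun (p x / q x)) μ := by
  refine ((hKL.add hq_int).sub hp_int).congr ?_
  filter_upwards [hq] with x hx
  exact (mul_klFun_div hx).symm

lemma integral_mul_klFun_div (hq : ∀ᵐ x ∂μ, q x ≠ 0) (hp_int : Integrable p μ)
    (hq_int : Integrable q μ) (hKL : Integrable (fun x => p x * log (p x / q x)) μ)
    (h_eq : ∫ x, p x ∂μ = ∫ x, q x ∂μ) :
    ∫ x, q x * klFun (p x / q x) ∂μ = ∫ x, p x * log (p x / q x) ∂μ := by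
  have hsum : Integrable (fun x => p x * log (p x / q x) + q x) μ := hKL.add hq_int
  rw [integral_congr_ae (hq.mono fun x hx => mul_klFun_div hx), integral_sub hsum hp_int,
    integral_add hKL hq_int, h_eq, add_sub_cancel_right]

lemma integral_mul_log_div_nonneg (hp : ∀ᵐ x ∂μ, 0 ≤ p x) (hq : ∀ᵐ x ∂μ, 0 < q x)
    (hp_int : Integrable p μ) (hq_int : Integrable q μ)
    (hKL : Integrable (fun x => p x * log (p x / q x)) μ) (h_eq : ∫ x, p x ∂μ = ∫ x, q x ∂μ) :
    0 ≤ ∫ x, p x * log (p x / q x) ∂μ := by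
  rw [← integral_mul_klFun_div (hq.mono fun x hx => hx.ne') hp_int hq_int hKL h_eq]
  refine integral_nonneg_of_ae ?_
  filter_upwards [hp, hq] with x hpx hqx
  exact mul_nonneg hqx.le (klFun_nonneg (div_nonneg hpx hqx.le))

end KullbackLeibler

section InnerProduct

variable {E : Type*} [NormedAddCommGroup E] [InnerProductSpace ℝ E]

lemma le_inner_smul_sub_smul (U V : E) {α β m Cs lam : ℝ} (hlam : 0 < lam) (hm : m ≤ β)
    (hU : ‖U‖ ^ 2 ≤ Cs) :
    (m - lam / 2 * Cs) * ‖U - V‖ ^ 2 - (α - β) ^ 2 / (2 * lam) ≤ ⟪α • U - β • V, U - V⟫ := by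
  have hsplit : ⟪α • U - β • V, U - V⟫ = (α - β) * ⟪U, U - V⟫ + β * ‖U - V‖ ^ 2 := by
    have : α • U - β • V = (α - β) • U + β • (U - V) := by
      rw [sub_smul, smul_sub]; abel
    rw [this, inner_add_left, real_inner_smul_left, real_inner_smul_left,
      real_inner_self_eq_norm_sq]
  have hcs : -(|α - β| * (‖U‖ * ‖U - V‖)) ≤ (α - β) * ⟪U, U - V⟫ := by
    have h := mul_le_mul_of_nonneg_left (abs_real_inner_le_norm U (U - V)) (abs_nonneg (α - β))
    rw [← abs_mul] at h
    exact (neg_le_neg h).trans (neg_abs_le _)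
  have hyoung : |α - β| * (‖U‖ * ‖U - V‖)
      ≤ (α - β) ^ 2 / (2 * lam) + lam / 2 * (‖U‖ ^ 2 * ‖U - V‖ ^ 2) := by
    have h := sq_nonneg (|α - β| - lam * (‖U‖ * ‖U - V‖))
    rw [div_add' _ _ _ (by positivity), le_div_iff₀ (by positivity)]
    nlinarith [sq_abs (α - β)]
  have hCs : lam / 2 * (‖U‖ ^ 2 * ‖U - V‖ ^ 2) ≤ lam / 2 * (Cs * ‖U - V‖ ^ 2) := by
    gcongr
  have hβ : m * ‖U - V‖ ^ 2 ≤ β * ‖U - V‖ ^ 2 := mul_le_mul_of_nonneg_right hm (sq_nonneg _)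
  linarith

lemma le_inner_smul_sub_smul_mul (U V : E) {P Q m M Cs Cmax k lam : ℝ} (hlam : 0 < lam)
    (hM : 0 ≤ M) (hP : 0 < P) (hPC : P ≤ Cmax) (hQ : 0 < Q) (hQC : Q ≤ Cmax) (hm : m ≤ Q ^ k)
    (hU : ‖U‖ ^ 2 ≤ Cs) (hPQ : (P ^ k - Q ^ k) ^ 2 ≤ k ^ 2 * M * (P - Q) ^ 2) :
    (m - lam / 2 * Cs) * (‖U - V‖ ^ 2 * P) - k ^ 2 * Cmax ^ 2 * M / lam * (Q * klFun (P / Q))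
      ≤ ⟪P ^ k • U - Q ^ k • V, U - V⟫ * P := by
  have hyoung := mul_le_mul_of_nonneg_right
    (le_inner_smul_sub_smul U V (α := P ^ k) hlam hm hU) hP.le
  have hKL : (P - Q) ^ 2 ≤ 2 * Cmax * (Q * klFun (P / Q)) := by
    refine (sq_sub_le_two_mul_max_mul_klFun_div hP.le hQ).trans ?_
    have := mul_nonneg hQ.le (klFun_nonneg (div_nonneg hP.le hQ.le))
    gcongr
    exact max_le hPC hQC
  have hdiff : (P ^ k - Q ^ k) ^ 2 / (2 * lam) * P
      ≤ k ^ 2 * Cmax ^ 2 * M / lam * (Q * klFun (P / Q)) := by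
    have hCmax : 0 ≤ Cmax := hP.le.trans hPC
    calc (P ^ k - Q ^ k) ^ 2 / (2 * lam) * P ≤ k ^ 2 * M * (P - Q) ^ 2 / (2 * lam) * Cmax := by
          gcongr
      _ ≤ k ^ 2 * M * (2 * Cmax * (Q * klFun (P / Q))) / (2 * lam) * Cmax := by gcongr
      _ = k ^ 2 * Cmax ^ 2 * M / lam * (Q * klFun (P / Q)) := by
          field_simp
  linarith

variable [CompleteSpace E]

lemma gradient_log_div {f g : E → ℝ} {x : E} (hf : DifferentiableAt ℝ f x)
    (hg : DifferentiableAt ℝ g x) (hfx : f x ≠ 0) (hgx : g x ≠ 0) :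
    gradient (fun y => log (f y / g y)) x
      = gradient (fun y => log (f y)) x - gradient (fun y => log (g y)) x := by
  have heq : (fun y => log (f y / g y)) =ᶠ[nhds x] fun y => log (f y) - log (g y) := by
    filter_upwards [hf.continuousAt.eventually_ne hfx, hg.continuousAt.eventually_ne hgx]
      with y hfy hgy
    exact log_div hfy hgy
  rw [heq.gradient_eq]
  refine HasGradientAt.gradient ?_
  rw [hasGradientAt_iff_hasFDerivAt, map_sub]
  exact (hf.log hfx).hasGradientAt.hasFDerivAt.sub (hg.log hgx).hasGradientAt.hasFDerivAt

variable [MeasurableSpace E] {μ : Measure E} {p q : E → ℝ} {m M c Cs Cmax k lam : ℝ}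

lemma le_integral_inner_gradient_log_div_mul (hlam : 0 < lam) (hM : 0 ≤ M)
    (hc : k ^ 2 * Cmax ^ 2 * M / lam ≤ c) (hp_diff : Differentiable ℝ p)
    (hq_diff : Differentiable ℝ q) (hp : ∀ᵐ x ∂μ, 0 < p x ∧ p x ≤ Cmax)
    (hq : ∀ᵐ x ∂μ, 0 < q x ∧ q x ≤ Cmax) (hm : ∀ᵐ x ∂μ, m ≤ q x ^ k)
    (hCs : ∀ᵐ x ∂μ, ‖gradient (fun y => log (p y)) x‖ ^ 2 ≤ Cs)
    (hpq : ∀ᵐ x ∂μ, (p x ^ k - q x ^ k) ^ 2 ≤ k ^ 2 * M * (p x - q x) ^ 2)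
    (hp_int : Integrable p μ) (hq_int : Integrable q μ) (h_eq : ∫ x, p x ∂μ = ∫ x, q x ∂μ)
    (hint_lhs : Integrable (fun x =>
      ⟪p x ^ k • gradient (fun y => log (p y)) x - q x ^ k • gradient (fun y => log (q y)) x,
        gradient (fun y => log (p y / q y)) x⟫ * p x) μ)
    (hint_grad : Integrable (fun x => ‖gradient (fun y => log (p y / q y)) x‖ ^ 2 * p x) μ)
    (hint_KL : Integrable (fun x => p x * log (p x / q x)) μ) :
    (m - lam / 2 * Cs) * (∫ x, ‖gradient (fun y => log (p y / q y)) x‖ ^ 2 * p x ∂μ)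
        - c * (∫ x, p x * log (p x / q x) ∂μ)
      ≤ ∫ x, ⟪p x ^ k • gradient (fun y => log (p y)) x
          - q x ^ k • gradient (fun y => log (q y)) x,
          gradient (fun y => log (p y / q y)) x⟫ * p x ∂μ := by
  have hq_ne : ∀ᵐ x ∂μ, q x ≠ 0 := hq.mono fun x hx => hx.1.ne'
  have hKL : 0 ≤ ∫ x, p x * log (p x / q x) ∂μ := integral_mul_log_div_nonneg
    (hp.mono fun x hx => hx.1.le) (hq.mono fun x hx => hx.1) hp_int hq_int hint_KL h_eq
  have hint_klFun := integrable_mul_klFun_div hq_ne hp_int hq_int hint_KL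
  have h_klFun : (m - lam / 2 * Cs) * (∫ x, ‖gradient (fun y => log (p y / q y)) x‖ ^ 2 * p x ∂μ)
        - k ^ 2 * Cmax ^ 2 * M / lam * (∫ x, q x * klFun (p x / q x) ∂μ)
      ≤ ∫ x, ⟪p x ^ k • gradient (fun y => log (p y)) x
          - q x ^ k • gradient (fun y => log (q y)) x,
          gradient (fun y => log (p y / q y)) x⟫ * p x ∂μ := by
    rw [← integral_const_mul, ← integral_const_mul,
      ← integral_sub (hint_grad.const_mul _) (hint_klFun.const_mul _)]
    refine integral_mono_ae ((hint_grad.const_mul _).sub (hint_klFun.const_mul _)) hint_lhs ?_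
    filter_upwards [hp, hq, hm, hCs, hpq] with x ⟨hpx, hpC⟩ ⟨hqx, hqC⟩ hmx hCsx hpqx
    rw [gradient_log_div (hp_diff x) (hq_diff x) hpx.ne' hqx.ne']
    exact le_inner_smul_sub_smul_mul _ _ hlam hM hpx hpC hqx hqC hmx hCsx hpqx
  rw [integral_mul_klFun_div hq_ne hp_int hq_int hint_KL h_eq] at h_klFun
  linarith [mul_le_mul_of_nonneg_right hc hKL]

end InnerProduct

theorem internal_energy_cross_term_bound_general
    {d : ℕ} (Ω : Set (EuclideanSpace ℝ (Fin d))) (hΩ : MeasurableSet Ω)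
    (p q : EuclideanSpace ℝ (Fin d) → ℝ)
    (Cmin Cmax Cs : ℝ) (hCmin : 0 < Cmin)
    (hp_reg : ContDiff ℝ 1 p) (hq_reg : ContDiff ℝ 1 q)
    (hp_bnd : ∀ x ∈ Ω, Cmin ≤ p x ∧ p x ≤ Cmax)
    (hq_bnd : ∀ x ∈ Ω, Cmin ≤ q x ∧ q x ≤ Cmax)
    (hp_prob : ∫ x in Ω, p x = 1) (hq_prob : ∫ x in Ω, q x = 1)
    (hCs : ∀ x ∈ Ω, ‖gradient (fun y => Real.log (p y)) x‖ ^ 2 ≤ Cs)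
    (k lam : ℝ) (hk : k ≠ 0) (hlam : 0 < lam)
    (K₁ K₂ : ℝ)
    (hKpos : 0 < k →
      K₁ = Cmin ^ k - lam / 2 * Cs ∧
      K₂ = -(k ^ 2 * Cmax ^ 2 * max (Cmin ^ (2 * k - 2)) (Cmax ^ (2 * k - 2)))
            / ((1 - Real.log 2) * lam))
    (hKneg : k < 0 →
      K₁ = Cmax ^ k - lam / 2 * Cs ∧
      K₂ = -(k ^ 2 * Cmax ^ 2 * Cmin ^ (2 * k - 2)) / ((1 - Real.log 2) * lam))
    (hint_lhs : IntegrableOn (fun x =>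
      ⟪(p x ^ k) • gradient (fun y => Real.log (p y)) x
        - (q x ^ k) • gradient (fun y => Real.log (q y)) x,
        gradient (fun y => Real.log (p y / q y)) x⟫ * p x) Ω)
    (hint_grad : IntegrableOn (fun x =>
      ‖gradient (fun y => Real.log (p y / q y)) x‖ ^ 2 * p x) Ω)
    (hint_KL : IntegrableOn (fun x => p x * Real.log (p x / q x)) Ω) :
    K₁ * (∫ x in Ω, ‖gradient (fun y => Real.log (p y / q y)) x‖ ^ 2 * p x)
      + K₂ * (∫ x in Ω, p x * Real.log (p x / q x))
    ≤ ∫ x in Ω,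
        ⟪(p x ^ k) • gradient (fun y => Real.log (p y)) x
          - (q x ^ k) • gradient (fun y => Real.log (q y)) x,
          gradient (fun y => Real.log (p y / q y)) x⟫ * p x := by
  obtain ⟨m, M, hM, rfl, rfl, hm, hpq⟩ : ∃ m M, 0 ≤ M ∧ K₁ = m - lam / 2 * Cs ∧
      K₂ = -(k ^ 2 * Cmax ^ 2 * M) / ((1 - log 2) * lam) ∧ (∀ x ∈ Ω, m ≤ q x ^ k) ∧
      ∀ x ∈ Ω, (p x ^ k - q x ^ k) ^ 2 ≤ k ^ 2 * M * (p x - q x) ^ 2 := by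
    rcases hk.lt_or_gt with hk | hk
    · obtain ⟨rfl, rfl⟩ := hKneg hk
      exact ⟨_, _, (rpow_pos_of_pos hCmin _).le, rfl, rfl,
        fun x hx => rpow_le_rpow_of_nonpos (hCmin.trans_le (hq_bnd x hx).1) (hq_bnd x hx).2 hk.le,
        fun x hx => sq_rpow_sub_rpow_le_of_le_one hCmin (by linarith) (hp_bnd x hx) (hq_bnd x hx)⟩
    · obtain ⟨rfl, rfl⟩ := hKpos hk
      exact ⟨_, _, le_max_of_le_left (rpow_pos_of_pos hCmin _).le, rfl, rfl,
        fun x hx => rpow_le_rpow hCmin.le (hq_bnd x hx).1 hk.le,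
        fun x hx => sq_rpow_sub_rpow_le hCmin (hp_bnd x hx) (hq_bnd x hx)⟩
  have hlog_pos : 0 < (1 - log 2) * lam := mul_pos (by linarith [log_two_lt_d9]) hlam
  have hlog_le : (1 - log 2) * lam ≤ lam :=
    mul_le_of_le_one_left hlam.le (by linarith [log_nonneg one_le_two])
  rw [neg_div, neg_mul, ← sub_eq_add_neg]
  exact le_integral_inner_gradient_log_div_mul hlam hM
    (div_le_div_of_nonneg_left (by positivity) hlog_pos hlog_le)
    (hp_reg.differentiable one_ne_zero) (hq_reg.differentiable one_ne_zero)
    (ae_restrict_of_forall_mem hΩ fun x hx => ⟨hCmin.trans_le (hp_bnd x hx).1, (hp_bnd x hx).2⟩)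
    (ae_restrict_of_forall_mem hΩ fun x hx => ⟨hCmin.trans_le (hq_bnd x hx).1, (hq_bnd x hx).2⟩)
    (ae_restrict_of_forall_mem hΩ hm) (ae_restrict_of_forall_mem hΩ hCs)
    (ae_restrict_of_forall_mem hΩ hpq) (Integrable.of_integral_ne_zero (by simp [hp_prob]))
    (Integrable.of_integral_ne_zero (by simp [hq_prob])) (hp_prob.trans hq_prob.symm)
    hint_lhs hint_grad hint_KL

/-- Lemma on the internal-energy cross term: for probability densities `p, q` bounded
between `C_min` and `C_max` with bounded score of `p`, and any `k ≠ 0`, `λ > 0`, the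
integral `∫ [pᵏ∇log p − qᵏ∇log q]·∇log(p/q) p` is bounded below by
`K₁ ∫ ‖∇log(p/q)‖² p + K₂ D_KL(p‖q)` with the explicit constants `K₁, K₂`. -/
theorem internal_energy_cross_term_bound
    {d : ℕ} (Ω : Set (EuclideanSpace ℝ (Fin d))) (hΩ : MeasurableSet Ω)
    (p q : EuclideanSpace ℝ (Fin d) → ℝ)
    (Cmin Cmax Cs : ℝ) (hCmin : 0 < Cmin) (hCmax : Cmin ≤ Cmax)
    (hp_reg : ContDiff ℝ 1 p) (hq_reg : ContDiff ℝ 1 q)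
    (hp_bnd : ∀ x ∈ Ω, Cmin ≤ p x ∧ p x ≤ Cmax)
    (hq_bnd : ∀ x ∈ Ω, Cmin ≤ q x ∧ q x ≤ Cmax)
    (hp_prob : ∫ x in Ω, p x = 1) (hq_prob : ∫ x in Ω, q x = 1)
    (hCs : ∀ x ∈ Ω, ‖gradient (fun y => Real.log (p y)) x‖ ^ 2 ≤ Cs)
    (k lam : ℝ) (hk : k ≠ 0) (hlam : 0 < lam)
    (K₁ K₂ : ℝ)
    (hKpos : 0 < k →
      K₁ = Cmin ^ k - lam / 2 * Cs ∧
      K₂ = -(k ^ 2 * Cmax ^ 2 * max (Cmin ^ (2 * k - 2)) (Cmax ^ (2 * k - 2)))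
            / ((1 - Real.log 2) * lam))
    (hKneg : k < 0 →
      K₁ = Cmax ^ k - lam / 2 * Cs ∧
      K₂ = -(k ^ 2 * Cmax ^ 2 * Cmin ^ (2 * k - 2)) / ((1 - Real.log 2) * lam))
    (hint_lhs : IntegrableOn (fun x =>
      ⟪(p x ^ k) • gradient (fun y => Real.log (p y)) x
        - (q x ^ k) • gradient (fun y => Real.log (q y)) x,
        gradient (fun y => Real.log (p y / q y)) x⟫ * p x) Ω)
    (hint_grad : IntegrableOn (fun x =>
      ‖gradient (fun y => Real.log (p y / q y)) x‖ ^ 2 * p x) Ω)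
    (hint_KL : IntegrableOn (fun x => p x * Real.log (p x / q x)) Ω) :
    K₁ * (∫ x in Ω, ‖gradient (fun y => Real.log (p y / q y)) x‖ ^ 2 * p x)
      + K₂ * (∫ x in Ω, p x * Real.log (p x / q x))
    ≤ ∫ x in Ω,
        ⟪(p x ^ k) • gradient (fun y => Real.log (p y)) x
          - (q x ^ k) • gradient (fun y => Real.log (q y)) x,
          gradient (fun y => Real.log (p y / q y)) x⟫ * p x :=
  internal_energy_cross_term_bound_general Ω hΩ p q Cmin Cmax Cs hCmin hp_reg hq_reg hp_bnd hq_bnd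
    hp_prob hq_prob hCs k lam hk hlam K₁ K₂ hKpos hKneg hint_lhs hint_grad hint_KL
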